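/- Let K ⊂ X ⊂ ℝⁿ with X compact and K closed, let I_K be the indicator of K, and define the averaged modulus of continuity ω̄_{I_K}(t) = ∫_X ω_{I_K}^x(t) dx. Then ω̄_{I_K}(t) ≤ vol(∂K(t)), where ∂K(t) = { x ∈ X : dist(x, ∂K) ≤ t } is the t-neighborhood of the boundary of K within X. -/

import Mathlib

/-!
If `x` is farther than `t` from `∂K`, then every `y` within distance `t` of `x` lies on the same
side of `K` as `x`, since otherwise the segment from `x` to `y` would cross `∂K`. Hence the
pointwise modulus of `I_K` vanishes on `X \ ∂K(t)` and is at most `1` on `∂K(t)`; integrate.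
-/

open MeasureTheory Metric Set

theorem IsPreconnected.inter_frontier_nonempty {X : Type*} [TopologicalSpace X] {s t : Set X}
    (hs : IsPreconnected s) (hst : (s ∩ t).Nonempty) (hst' : (s \ t).Nonempty) :
    (s ∩ frontier t).Nonempty := by
  by_contra h
  have hint : s ∩ closure t ⊆ interior t := fun z ⟨hzs, hzt⟩ =>
    by_contra fun hzi => h ⟨z, hzs, hzt, hzi⟩
  obtain ⟨x, hxs, hxt⟩ := hst
  obtain ⟨y, hys, hyt⟩ := hst'
  have hsub : s ⊆ interior t :=
    hs.subset_of_closure_inter_subset isOpen_interior ⟨x, hxs, hint ⟨hxs, subset_closure hxt⟩⟩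
      fun z ⟨hz, hzs⟩ => hint ⟨hzs, closure_mono interior_subset hz⟩
  exact hyt (interior_subset (hsub hys))

section NormedSpace

variable {E : Type*} [NormedAddCommGroup E] [NormedSpace ℝ E]

theorem infDist_frontier_le_dist_of_mem_of_notMem {K : Set E} {x y : E} (hx : x ∈ K)
    (hy : y ∉ K) : infDist x (frontier K) ≤ dist x y := by
  obtain ⟨z, hz, hzK⟩ := (convex_segment x y).isPreconnected.inter_frontier_nonempty
    ⟨x, left_mem_segment ℝ x y, hx⟩ ⟨y, right_mem_segment ℝ x y, hy⟩
  calc infDist x (frontier K) ≤ dist x z := infDist_le_dist_of_mem hzK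
    _ ≤ dist x y := by linarith [dist_add_dist_of_mem_segment hz, dist_nonneg (x := z) (y := y)]

theorem infDist_frontier_le_dist_of_not_iff {K : Set E} {x y : E} (h : ¬(x ∈ K ↔ y ∈ K)) :
    infDist x (frontier K) ≤ dist x y := by
  by_cases hx : x ∈ K
  · exact infDist_frontier_le_dist_of_mem_of_notMem hx fun hy => h (iff_of_true hx hy)
  · rw [← frontier_compl]
    exact infDist_frontier_le_dist_of_mem_of_notMem hx fun hy => h (iff_of_false hx hy)

/-- The modulus of continuity `ω_f^x(t)` of `f` at `x`, with `y` ranging over `X`. -/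
noncomputable def localModulus (f : E → ℝ) (X : Set E) (t : ℝ) (x : E) : ℝ :=
  sSup {v : ℝ | ∃ y ∈ X, ‖y - x‖ ≤ t ∧ v = |f y - f x|}

theorem localModulus_indicator_le_indicator {X K : Set E} {t : ℝ} {x : E} (hx : x ∈ X) :
    localModulus (K.indicator fun _ => 1) X t x ≤
      {z ∈ X | infDist z (frontier K) ≤ t}.indicator 1 x := by
  have hnonneg : ∀ (S : Set E) z, 0 ≤ S.indicator (fun _ => (1 : ℝ)) z :=
    fun S => indicator_nonneg fun _ _ => zero_le_one
  refine Real.sSup_le ?_ (hnonneg _ x)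
  rintro _ ⟨y, -, hyx, rfl⟩
  by_cases hxy : x ∈ K ↔ y ∈ K
  · rw [indicator_const_eq_indicator_const hxy.symm, sub_self, abs_zero]
    exact hnonneg _ x
  · have hxS : x ∈ {z ∈ X | infDist z (frontier K) ≤ t} :=
      ⟨hx, (infDist_frontier_le_dist_of_not_iff hxy).trans (by rwa [dist_comm, dist_eq_norm])⟩
    rw [indicator_of_mem hxS]
    exact abs_sub_le_of_nonneg_of_le (hnonneg K y) (indicator_le_self' (fun _ _ => zero_le_one) y)
      (hnonneg K x) (indicator_le_self' (fun _ _ => zero_le_one) x)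

end NormedSpace

theorem setIntegral_le_measureReal_of_le_indicator {α : Type*} [MeasurableSpace α]
    {μ : Measure α} {f : α → ℝ} {s S : Set α} (hs : MeasurableSet s) (hS : MeasurableSet S)
    (hSμ : μ S ≠ ⊤) (h : ∀ x ∈ s, f x ≤ S.indicator 1 x) : ∫ x in s, f x ∂μ ≤ μ.real S := by
  by_cases hf : IntegrableOn f s μ
  · calc ∫ x in s, f x ∂μ ≤ ∫ x in s, S.indicator 1 x ∂μ :=
          setIntegral_mono_on hf
            ((integrable_indicator_iff hS).2 (integrableOn_const hSμ)).integrableOn hs h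
      _ = μ.real (S ∩ s) := by rw [integral_indicator_one hS, measureReal_restrict_apply hS]
      _ ≤ μ.real S := measureReal_mono inter_subset_left hSμ
  · rw [integral_undef hf]
    exact measureReal_nonneg

theorem averaged_modulus_le_vol_boundary_nbhd_general (n : ℕ)
    (X K : Set (EuclideanSpace ℝ (Fin n))) (hX : IsCompact X) (t : ℝ) :
    (∫ x in X, sSup {v : ℝ | ∃ y ∈ X, ‖y - x‖ ≤ t ∧
        v = |K.indicator (fun _ => (1 : ℝ)) y - K.indicator (fun _ => (1 : ℝ)) x|}) ≤
      (volume {x ∈ X | Metric.infDist x (frontier K) ≤ t}).toReal := by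
  have hS : IsClosed {x ∈ X | infDist x (frontier K) ≤ t} :=
    hX.isClosed.inter (isClosed_le (continuous_infDist_pt _) continuous_const)
  exact setIntegral_le_measureReal_of_le_indicator hX.isClosed.measurableSet hS.measurableSet
    (measure_mono (μ := volume) inter_subset_left |>.trans_lt hX.measure_lt_top).ne
    fun x hx => localModulus_indicator_le_indicator hx

/-- The averaged modulus of continuity of the indicator of `K` is bounded by the
volume of the `t`-neighborhood of the boundary of `K` within `X`. -/
theorem averaged_modulus_le_vol_boundary_nbhd (n : ℕ)
    (X K : Set (EuclideanSpace ℝ (Fin n))) (hX : IsCompact X)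
    (hKclosed : IsClosed K) (hKX : K ⊆ X) (t : ℝ) (ht : 0 ≤ t) :
    (∫ x in X, sSup {v : ℝ | ∃ y ∈ X, ‖y - x‖ ≤ t ∧
        v = |K.indicator (fun _ => (1 : ℝ)) y - K.indicator (fun _ => (1 : ℝ)) x|}) ≤
      (volume {x ∈ X | Metric.infDist x (frontier K) ≤ t}).toReal :=
  averaged_modulus_le_vol_boundary_nbhd_general n X K hX t
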